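/- Let $A$ be a unital ring, $W$ a finite group, $W' \leq W$ a subgroup with a homomorphism from $W'$ to the units of $A$, and let $Z(W,W',A) = \operatorname{End}_A(\operatorname{Map}_{W'}(W,A))$ be the centralizer algebra. Define the idempotent $e(W') \in Z(W,W',A)$ by $(e(W')f)(u) = f(u)$ if $u \in W'$ and $(e(W')f)(u) = 0$ otherwise. Then $e(W')$ is a well-defined idempotent endomorphism and the corner ring $e(W') \, Z(W,W',A) \, e(W')$ is isomorphic as a ring to $A$. -/

import Mathlib

/-!
Evaluation at `1` and "extend `φ` by zero, times `b`" exhibit `A` as a direct summand of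
`Map_{W'}(W, A)`, and `e(W')` is the projection onto this summand. For any retract `N` of a module
`M`, conjugating by the retraction identifies `End N` with the corner of `End M` cut out by the
projection; here `N = A_A`, whose endomorphism ring is `A` acting by left multiplication.
-/

/-- The right `A`-module `Map_{W'}(W, A) = {f : W → A ∣ f (w' * w) = φ(w') * f w}`,
realized as a submodule of `W → A` over `Aᵐᵒᵖ` (right `A`-modules = left `Aᵐᵒᵖ`-modules). -/
def MapsWprime (A : Type*) [Ring A] (W : Type*) [Group W]
    (W' : Subgroup W) (φ : W' →* Aˣ) : Submodule Aᵐᵒᵖ (W → A) where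
  carrier := {f | ∀ (w' : W') (w : W), f ((w' : W) * w) = (φ w' : A) * f w}
  add_mem' {f g} hf hg := by
    intro w' w
    simp only [Pi.add_apply, hf w' w, hg w' w, mul_add]
  zero_mem' := by intro w' w; simp
  smul_mem' := by
    intro a f hf w' w
    simp only [Pi.smul_apply, MulOpposite.smul_eq_mul_unop, hf w' w, mul_assoc]

namespace Module.End

variable {R M N : Type*} [Semiring R] [AddCommMonoid M] [Module R M] [AddCommMonoid N]
  [Module R N] {ι : N →ₗ[R] M} {π : M →ₗ[R] N}

def conjRetract (h : Function.LeftInverse π ι) : Module.End R N →ₙ+* Module.End R M where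
  toFun g := ι ∘ₗ g ∘ₗ π
  map_mul' g g' := by
    ext x
    simp [Module.End.mul_apply, h _]
  map_zero' := by simp
  map_add' g g' := by simp [LinearMap.add_comp, LinearMap.comp_add]

variable (h : Function.LeftInverse π ι)

@[simp]
lemma conjRetract_apply (g : Module.End R N) : conjRetract h g = ι ∘ₗ g ∘ₗ π := rfl

lemma conjRetract_one : conjRetract h 1 = ι ∘ₗ π := rfl

include h in
lemma isIdempotentElem_comp_of_leftInverse : IsIdempotentElem (ι ∘ₗ π) := by
  rw [← conjRetract_one h, IsIdempotentElem, ← map_mul, one_mul]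

lemma conjRetract_injective : Function.Injective (conjRetract h) := by
  intro g g' hg
  ext y
  simpa [h _] using congrArg π (LinearMap.congr_fun hg (ι y))

lemma range_conjRetract :
    Set.range (conjRetract h) = {z | (ι ∘ₗ π) * z * (ι ∘ₗ π) = z} := by
  ext z
  constructor
  · rintro ⟨g, rfl⟩
    ext x
    simp [Module.End.mul_apply, h _]
  · intro hz
    refine ⟨π ∘ₗ z ∘ₗ ι, ?_⟩
    conv_rhs => rw [← hz]
    rfl

end Module.End

namespace MapsWprime

variable {A : Type*} [Ring A] {W : Type*} [Group W] {W' : Subgroup W} (φ : W' →* Aˣ)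

lemma apply_of_mem {f : W → A} (hf : f ∈ MapsWprime A W W' φ) {u : W} (hu : u ∈ W') :
    f u = φ ⟨u, hu⟩ * f 1 := by
  simpa using hf ⟨u, hu⟩ 1

open scoped Classical

noncomputable def extendByZero : MapsWprime A W W' φ :=
  ⟨fun u => if hu : u ∈ W' then (φ ⟨u, hu⟩ : A) else 0, by
    intro w' w
    by_cases hw : w ∈ W'
    · have hw'w : (w' : W) * w ∈ W' := mul_mem w'.2 hw
      simp only [dif_pos hw, dif_pos hw'w]
      rw [← Units.val_mul, ← map_mul]
      rfl
    · have hw'w : (w' : W) * w ∉ W' := by rwa [Subgroup.mul_mem_cancel_left _ w'.2]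
      simp [hw, hw'w]⟩

lemma extendByZero_apply (u : W) :
    (extendByZero φ : W → A) u = if hu : u ∈ W' then (φ ⟨u, hu⟩ : A) else 0 := rfl

lemma extendByZero_apply_one : (extendByZero φ : W → A) 1 = 1 := by
  rw [extendByZero_apply, dif_pos W'.one_mem]
  exact congrArg Units.val (map_one φ)

/-- The inclusion `A_A → Map_{W'}(W, A)` of the summand of maps supported on `W'`. -/
noncomputable def singleOne : A →ₗ[Aᵐᵒᵖ] MapsWprime A W W' φ where
  toFun b := MulOpposite.op b • extendByZero φ
  map_add' b b' := by rw [MulOpposite.op_add, add_smul]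
  map_smul' c b := by
    rw [MulOpposite.smul_eq_mul_unop, MulOpposite.op_mul, MulOpposite.op_unop, mul_smul,
      RingHom.id_apply]

def evalOne : MapsWprime A W W' φ →ₗ[Aᵐᵒᵖ] A :=
  LinearMap.proj (R := Aᵐᵒᵖ) (φ := fun _ : W => A) 1 ∘ₗ (MapsWprime A W W' φ).subtype

lemma evalOne_singleOne : Function.LeftInverse (evalOne φ) (singleOne φ) := by
  intro b
  simp [evalOne, singleOne, MulOpposite.smul_eq_mul_unop, extendByZero_apply_one]

lemma singleOne_evalOne_apply (f : MapsWprime A W W' φ) (u : W) :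
    (singleOne φ (evalOne φ f) : W → A) u = if u ∈ W' then (f : W → A) u else 0 := by
  by_cases hu : u ∈ W'
  · simp [singleOne, evalOne, MulOpposite.smul_eq_mul_unop, extendByZero_apply, hu,
      apply_of_mem φ f.2 hu]
  · simp [singleOne, evalOne, extendByZero_apply, hu]

end MapsWprime

open scoped Classical in
theorem corner_of_centralizer_algebra_general (A : Type*) [Ring A]
    (W : Type*) [Group W] (W' : Subgroup W) (φ : W' →* Aˣ) :
    ∃ e : Module.End Aᵐᵒᵖ (MapsWprime A W W' φ),
      (∀ (f : MapsWprime A W W' φ) (u : W),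
        ((e f : W → A) u) = if u ∈ W' then (f : W → A) u else 0) ∧
      e * e = e ∧
      ∃ Φ : A → Module.End Aᵐᵒᵖ (MapsWprime A W W' φ),
        (∀ a b : A, Φ (a + b) = Φ a + Φ b) ∧
        (∀ a b : A, Φ (a * b) = Φ a * Φ b) ∧
        Φ 1 = e ∧
        Function.Injective Φ ∧
        Set.range Φ = {z | e * z * e = z} := by
  have h := MapsWprime.evalOne_singleOne φ
  let Φ a := Module.End.conjRetract h (RingEquiv.moduleEndSelfOp A a)
  refine ⟨_, MapsWprime.singleOne_evalOne_apply φ,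
    Module.End.isIdempotentElem_comp_of_leftInverse h, Φ, fun a b => by simp only [Φ, map_add],
    fun a b => by simp only [Φ, map_mul],
    by simp only [Φ, map_one, Module.End.conjRetract_one], ?_, ?_⟩
  · exact (Module.End.conjRetract_injective h).comp (RingEquiv.moduleEndSelfOp A).injective
  · rw [← Module.End.range_conjRetract h]
    exact (RingEquiv.moduleEndSelfOp A).surjective.range_comp _

open scoped Classical in
/-- There is a well-defined idempotent `e(W') ∈ Z(W,W',A) = End_A(Map_{W'}(W,A))`, given by
`(e(W')f)(u) = f u` for `u ∈ W'` and `0` otherwise, and the corner ring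
`e(W') Z(W,W',A) e(W')` is isomorphic to `A` as a (unital) ring: there is an injective
additive and multiplicative map `Φ : A → Z(W,W',A)` with `Φ 1 = e(W')` whose image is
exactly the corner `{z ∣ e(W') * z * e(W') = z}`. -/
theorem corner_of_centralizer_algebra (A : Type*) [Ring A]
    (W : Type*) [Group W] [Fintype W] (W' : Subgroup W) (φ : W' →* Aˣ) :
    ∃ e : Module.End Aᵐᵒᵖ (MapsWprime A W W' φ),
      (∀ (f : MapsWprime A W W' φ) (u : W),
        ((e f : W → A) u) = if u ∈ W' then (f : W → A) u else 0) ∧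
      e * e = e ∧
      ∃ Φ : A → Module.End Aᵐᵒᵖ (MapsWprime A W W' φ),
        (∀ a b : A, Φ (a + b) = Φ a + Φ b) ∧
        (∀ a b : A, Φ (a * b) = Φ a * Φ b) ∧
        Φ 1 = e ∧
        Function.Injective Φ ∧
        Set.range Φ = {z | e * z * e = z} :=
  corner_of_centralizer_algebra_general A W W' φ
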